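/- arXiv:math/0503300 — 3 statements merged into one kernel-verified Lean document; each statement's English description precedes it below -/
import Mathlib

section
/- For every integer n ≥ 1, the number of plane trees with 2n edges having an even number of leaves equals the number of plane trees with 2n edges having an odd number of leaves; that is, P_e(2n) − P_o(2n) = 0. -/
/-- A plane tree: a root together with a finite ordered list of plane subtrees. -/
inductive PlaneTree : Type
  | node : List PlaneTree → PlaneTree

namespace PlaneTree

/-- The number of vertices of a plane tree. -/
def numVertices : PlaneTree → ℕ
  | node ts => 1 + (ts.attach.map fun x => numVertices x.1).sum
decreasing_by
  have := List.sizeOf_lt_of_mem x.2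
  simp only [PlaneTree.node.sizeOf_spec]
  omega

/-- The number of edges of a plane tree: one less than the number of vertices. -/
def numEdges (t : PlaneTree) : ℕ := t.numVertices - 1

/-- The number of leaves (vertices with no children) of a plane tree. -/
def numLeaves : PlaneTree → ℕ
  | node [] => 1
  | node (t :: ts) => ((t :: ts).attach.map fun x => numLeaves x.1).sum
decreasing_by
  have := List.sizeOf_lt_of_mem x.2
  simp only [PlaneTree.node.sizeOf_spec]
  omega

end PlaneTree

namespace PlaneTree

lemma numVertices_node (l : List PlaneTree) :
    numVertices (node l) = 1 + (l.map numVertices).sum := by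
  rw [numVertices]
  congr 1
  simp [List.attach_map_val]

lemma numLeaves_node_cons (t : PlaneTree) (ts : List PlaneTree) :
    numLeaves (node (t :: ts)) = ((t :: ts).map numLeaves).sum := by
  rw [numLeaves]
  simp [List.attach_map_val]

/-- Mirror involution on plane forests (via the rotation correspondence to binary trees). -/
def psi : List PlaneTree → List PlaneTree
  | [] => []
  | node cs :: ts => node (psi ts) :: psi cs
termination_by l => sizeOf l
decreasing_by
  all_goals (simp; try omega)

@[simp] lemma psi_nil : psi [] = [] := by rw [psi]

lemma psi_cons (cs ts : List PlaneTree) :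
    psi (node cs :: ts) = node (psi ts) :: psi cs := by rw [psi]

@[simp] lemma psi_psi (l : List PlaneTree) : psi (psi l) = l := by
  induction l using psi.induct with
  | case1 => simp
  | case2 cs ts ih1 ih2 => rw [psi_cons, psi_cons, ih1, ih2]

lemma psi_eq_nil_iff (l : List PlaneTree) : psi l = [] ↔ l = [] := by
  cases l with
  | nil => simp
  | cons t ts => cases t with | node cs => rw [psi_cons]; simp

lemma vert_psi (l : List PlaneTree) :
    ((psi l).map numVertices).sum = (l.map numVertices).sum := by
  induction l using psi.induct with
  | case1 => simp
  | case2 cs ts ih1 ih2 =>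
    rw [psi_cons]
    simp only [List.map_cons, List.sum_cons, numVertices_node, ih1, ih2]
    omega

lemma numLeaves_node_ne_nil (l : List PlaneTree) (hl : l ≠ []) :
    numLeaves (node l) = (l.map numLeaves).sum := by
  obtain ⟨a, as, rfl⟩ := List.exists_cons_of_ne_nil hl
  exact numLeaves_node_cons a as

@[simp] lemma numLeaves_node_nil : numLeaves (node []) = 1 := by rw [numLeaves]

lemma leaves_psi (l : List PlaneTree) (hl : l ≠ []) :
    ((psi l).map numLeaves).sum + (l.map numLeaves).sum
      = (l.map numVertices).sum + 1 := by
  induction l using psi.induct with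
  | case1 => simp at hl
  | case2 cs ts ih1 ih2 =>
    rw [psi_cons]
    simp only [List.map_cons, List.sum_cons, numVertices_node]
    rcases eq_or_ne cs [] with rfl | hcs <;> rcases eq_or_ne ts [] with rfl | hts
    · simp
    · have h1 := ih1 hts
      have hpts : psi ts ≠ [] := by rwa [ne_eq, psi_eq_nil_iff]
      rw [numLeaves_node_ne_nil _ hpts]
      simp only [psi_nil, List.map_nil, List.sum_nil, numLeaves_node_nil]
      omega
    · have h2 := ih2 hcs
      rw [numLeaves_node_ne_nil _ hcs]
      simp only [psi_nil, numLeaves_node_nil, List.map_nil, List.sum_nil]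
      omega
    · have h1 := ih1 hts
      have h2 := ih2 hcs
      have hpts : psi ts ≠ [] := by rwa [ne_eq, psi_eq_nil_iff]
      rw [numLeaves_node_ne_nil _ hpts, numLeaves_node_ne_nil _ hcs]
      omega

/-- The parity-flipping involution: mirror the binary tree obtained by rotation. -/
def phi : PlaneTree → PlaneTree
  | node l => node (psi l)

@[simp] lemma phi_phi (t : PlaneTree) : phi (phi t) = t := by
  cases t with | node l => simp [phi]

lemma numEdges_node (l : List PlaneTree) :
    numEdges (node l) = (l.map numVertices).sum := by
  simp [numEdges, numVertices_node]

lemma numEdges_phi (t : PlaneTree) : numEdges (phi t) = numEdges t := by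
  cases t with | node l => simp [phi, numEdges_node, vert_psi]

lemma key (t : PlaneTree) (h : t.numEdges ≠ 0) :
    (phi t).numLeaves + t.numLeaves = t.numEdges + 1 := by
  cases t with | node l =>
  have hl : l ≠ [] := by
    rintro rfl
    simp [numEdges_node] at h
  have hpl : psi l ≠ [] := by rwa [ne_eq, psi_eq_nil_iff]
  rw [phi, numLeaves_node_ne_nil _ hpl, numLeaves_node_ne_nil _ hl, numEdges_node]
  exact leaves_psi l hl

end PlaneTree

/-- For every integer `n ≥ 1`, the number of plane trees with `2n` edges having an even
number of leaves equals the number of plane trees with `2n` edges having an odd number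
of leaves: `P_e(2n) - P_o(2n) = 0`. -/
theorem even_leaves_card_eq_odd_leaves_card (n : ℕ) (hn : 1 ≤ n) :
    {t : PlaneTree | t.numEdges = 2 * n ∧ Even t.numLeaves}.ncard =
      {t : PlaneTree | t.numEdges = 2 * n ∧ Odd t.numLeaves}.ncard := by
  have hinj : Function.Injective PlaneTree.phi :=
    Function.LeftInverse.injective PlaneTree.phi_phi
  rw [← Set.ncard_image_of_injective _ hinj]
  congr 1
  ext t
  simp only [Set.mem_image, Set.mem_setOf_eq]
  constructor
  · rintro ⟨s, ⟨he, hev⟩, rfl⟩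
    have hne : s.numEdges ≠ 0 := by omega
    have hk := PlaneTree.key s hne
    refine ⟨by rw [PlaneTree.numEdges_phi, he], ?_⟩
    rw [Nat.odd_iff]
    rw [Nat.even_iff] at hev
    omega
  · rintro ⟨he, hod⟩
    refine ⟨PlaneTree.phi t, ⟨?_, ?_⟩, PlaneTree.phi_phi t⟩
    · rw [PlaneTree.numEdges_phi, he]
    · have hne : (PlaneTree.phi t).numEdges ≠ 0 := by
        rw [PlaneTree.numEdges_phi]; omega
      have hk := PlaneTree.key (PlaneTree.phi t) hne
      rw [PlaneTree.phi_phi, PlaneTree.numEdges_phi, he] at hk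
      rw [Nat.even_iff]
      rw [Nat.odd_iff] at hod
      omega
end

section
/- For every integer n ≥ 1, 2·P_e(2n) = c_{2n}; that is, exactly half of the plane trees with 2n edges have an even number of leaves. -/
lemma numVertices_eq (ts : List PlaneTree) :
    (PlaneTree.node ts).numVertices = 1 + (ts.map PlaneTree.numVertices).sum := by
  rw [PlaneTree.numVertices, List.attach_map_val]

lemma numLeaves_eq (t : PlaneTree) (ts : List PlaneTree) :
    (PlaneTree.node (t :: ts)).numLeaves = ((t :: ts).map PlaneTree.numLeaves).sum := by
  rw [PlaneTree.numLeaves, List.attach_map_val]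

def forestToTree : List PlaneTree → Tree Unit
  | [] => Tree.nil
  | PlaneTree.node us :: ts => Tree.node () (forestToTree us) (forestToTree ts)
termination_by l => sizeOf l
decreasing_by all_goals (simp only [List.cons.sizeOf_spec, PlaneTree.node.sizeOf_spec]; omega)

def treeToForest : Tree Unit → List PlaneTree
  | BinaryTree.nil => []
  | BinaryTree.node _ l r => PlaneTree.node (treeToForest l) :: treeToForest r

lemma tf_ft (l : List PlaneTree) : treeToForest (forestToTree l) = l := by
  induction l using forestToTree.induct with
  | case1 => simp [forestToTree, treeToForest]
  | case2 us ts ih1 ih2 => simp [forestToTree, treeToForest, ih1, ih2]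

lemma ft_tf (b : Tree Unit) : forestToTree (treeToForest b) = b := by
  induction b with
  | nil => simp [forestToTree, treeToForest]
  | node a l r ih1 ih2 => simp [forestToTree, treeToForest, ih1, ih2]

lemma ft_eq_nil (l : List PlaneTree) : forestToTree l = Tree.nil ↔ l = [] := by
  cases l with
  | nil => simp [forestToTree]
  | cons t ts => cases t; simp [forestToTree]

lemma numNodes_ft (l : List PlaneTree) :
    (forestToTree l).numNodes = (l.map PlaneTree.numVertices).sum := by
  induction l using forestToTree.induct with
  | case1 => simp [forestToTree]
  | case2 us ts ih1 ih2 =>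
    simp [forestToTree, ih1, ih2, numVertices_eq]
    omega

/-- number of nodes with nil left child -/
def leftNil : Tree Unit → ℕ
  | BinaryTree.nil => 0
  | BinaryTree.node _ l r => (if l = Tree.nil then 1 else 0) + leftNil l + leftNil r

/-- number of nodes with nil right child -/
def rightNil : Tree Unit → ℕ
  | BinaryTree.nil => 0
  | BinaryTree.node _ l r => (if r = Tree.nil then 1 else 0) + rightNil l + rightNil r

lemma leftNil_ft (l : List PlaneTree) :
    leftNil (forestToTree l) = (l.map PlaneTree.numLeaves).sum := by
  induction l using forestToTree.induct with
  | case1 => simp [forestToTree, leftNil]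
  | case2 us ts ih1 ih2 =>
    rw [forestToTree, leftNil, ih1, ih2]
    cases us with
    | nil => simp [PlaneTree.numLeaves, ft_eq_nil]
    | cons v vs =>
      have hne : forestToTree (v :: vs) ≠ Tree.nil := by simp [ft_eq_nil]
      rw [if_neg hne]
      simp only [numLeaves_eq, List.map_cons, List.sum_cons]
      omega

lemma leftNil_add_rightNil (b : Tree Unit) (hb : b ≠ Tree.nil) :
    leftNil b + rightNil b = b.numNodes + 1 := by
  induction b with
  | nil => exact absurd rfl hb
  | node a l r ih1 ih2 =>
    rw [leftNil, rightNil]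
    rcases eq_or_ne l Tree.nil with h | h
    · rcases eq_or_ne r Tree.nil with h' | h'
      · subst h h'; simp [leftNil, rightNil]
      · have := ih2 h'
        subst h; simp only [leftNil, rightNil, Tree.numNodes] at *
        simp [h']; omega
    · have hl := ih1 h
      rcases eq_or_ne r Tree.nil with h' | h'
      · subst h'; simp only [leftNil, rightNil, Tree.numNodes] at *
        simp [h]; omega
      · have hr := ih2 h'
        simp only [Tree.numNodes] at *
        simp [h, h']; omega

def mir : Tree Unit → Tree Unit
  | BinaryTree.nil => Tree.nil
  | BinaryTree.node a l r => Tree.node a (mir r) (mir l)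

lemma mir_mir (b : Tree Unit) : mir (mir b) = b := by
  induction b with
  | nil => rfl
  | node a l r ih1 ih2 => simp [mir, ih1, ih2]

lemma numNodes_mir (b : Tree Unit) : (mir b).numNodes = b.numNodes := by
  induction b with
  | nil => rfl
  | node a l r ih1 ih2 => simp only [Tree.numNodes] at *; simp [mir, ih1, ih2] <;> omega

lemma mir_eq_nil (b : Tree Unit) : mir b = Tree.nil ↔ b = Tree.nil := by
  cases b <;> simp [mir]

lemma leftNil_mir (b : Tree Unit) : leftNil (mir b) = rightNil b := by
  induction b with
  | nil => rfl
  | node a l r ih1 ih2 => simp [mir, leftNil, rightNil, ih1, ih2, mir_eq_nil]; omega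

/-- For every integer `n ≥ 1`, `2 · P_e(2n) = c_{2n}`: exactly half of the plane trees
with `2n` edges have an even number of leaves. -/
theorem two_mul_even_leaves_card_eq_catalan (n : ℕ) (hn : 1 ≤ n) :
    2 * {t : PlaneTree | t.numEdges = 2 * n ∧ Even t.numLeaves}.ncard = catalan (2 * n) := by
  set S := {t : PlaneTree | t.numEdges = 2 * n ∧ Even t.numLeaves}
  set A := {b : Tree Unit | b.numNodes = 2 * n ∧ Even (leftNil b)}
  set B := {b : Tree Unit | b.numNodes = 2 * n ∧ Odd (leftNil b)}
  -- the encoding map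
  set E : PlaneTree → Tree Unit := fun t => forestToTree (match t with | .node ts => ts) with hE
  have hEinj : Function.Injective E := by
    intro t t' h
    cases t with | node ts => cases t' with | node ts' =>
    have : treeToForest (forestToTree ts) = treeToForest (forestToTree ts') := by
      simp only [hE] at h; rw [h]
    rw [tf_ft, tf_ft] at this
    rw [this]
  have hedges : ∀ ts : List PlaneTree,
      (PlaneTree.node ts).numEdges = (forestToTree ts).numNodes := by
    intro ts
    rw [PlaneTree.numEdges, numVertices_eq, numNodes_ft]
    omega
  have himg : E '' S = A := by
    ext b
    constructor
    · rintro ⟨t, ⟨h1, h2⟩, rfl⟩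
      cases t with | node ts =>
      have hts : ts ≠ [] := by
        rintro rfl
        rw [hedges] at h1
        simp [forestToTree] at h1
        omega
      refine ⟨by rw [← hedges]; exact h1, ?_⟩
      rcases ts with _ | ⟨v, vs⟩
      · exact absurd rfl hts
      · simpa only [hE, leftNil_ft, ← numLeaves_eq] using h2
    · rintro ⟨h1, h2⟩
      refine ⟨PlaneTree.node (treeToForest b), ⟨?_, ?_⟩, by simp [hE, ft_tf]⟩
      · rw [hedges, ft_tf]; exact h1
      · have hb : b ≠ Tree.nil := by
          rintro rfl; simp at h1; omega
        have : treeToForest b ≠ [] := by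
          intro h
          apply hb
          rw [← ft_tf b, h]; exact (ft_eq_nil []).mpr rfl
        rcases h : treeToForest b with _ | ⟨v, vs⟩
        · exact absurd h this
        · rw [numLeaves_eq, ← leftNil_ft, ← h, ft_tf]
          exact h2
  have hmirimg : mir '' A = B := by
    have key : ∀ b ∈ A, mir b ∈ B := by
      rintro b ⟨h1, h2⟩
      have hb : b ≠ Tree.nil := by rintro rfl; simp at h1; omega
      have hsum := leftNil_add_rightNil b hb
      refine ⟨by rw [numNodes_mir]; exact h1, ?_⟩
      rw [leftNil_mir]
      rw [h1] at hsum
      rw [Nat.even_iff] at h2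
      rw [Nat.odd_iff]
      omega
    have key' : ∀ b ∈ B, mir b ∈ A := by
      rintro b ⟨h1, h2⟩
      have hb : b ≠ Tree.nil := by rintro rfl; simp at h1; omega
      have hsum := leftNil_add_rightNil b hb
      refine ⟨by rw [numNodes_mir]; exact h1, ?_⟩
      rw [leftNil_mir]
      rw [h1] at hsum
      rw [Nat.odd_iff] at h2
      rw [Nat.even_iff]
      omega
    ext b
    constructor
    · rintro ⟨a, ha, rfl⟩; exact key a ha
    · intro hb
      exact ⟨mir b, key' b hb, mir_mir b⟩
  have hmirinj : Function.Injective mir :=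
    Function.LeftInverse.injective mir_mir
  have hAfin : A.Finite := by
    apply Set.Finite.subset (Tree.treesOfNumNodesEq (2 * n)).finite_toSet
    intro b hb
    simp only [Finset.mem_coe, BinaryTree.mem_treesOfNumNodesEq]
    exact hb.1
  have hBfin : B.Finite := by
    apply Set.Finite.subset (Tree.treesOfNumNodesEq (2 * n)).finite_toSet
    intro b hb
    simp only [Finset.mem_coe, BinaryTree.mem_treesOfNumNodesEq]
    exact hb.1
  have hdisj : Disjoint A B := by
    rw [Set.disjoint_left]
    rintro b ⟨_, h2⟩ ⟨_, h2'⟩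
    exact ((Nat.not_odd_iff_even.mpr h2)) h2'
  have hunion : A ∪ B = ↑(Tree.treesOfNumNodesEq (2 * n)) := by
    ext b
    simp only [Set.mem_union, Finset.mem_coe, BinaryTree.mem_treesOfNumNodesEq, A, B,
      Set.mem_setOf_eq]
    constructor
    · rintro (⟨h, _⟩ | ⟨h, _⟩) <;> exact h
    · intro h
      rcases Nat.even_or_odd (leftNil b) with he | ho
      · exact Or.inl ⟨h, he⟩
      · exact Or.inr ⟨h, ho⟩
  have hSA : S.ncard = A.ncard := by
    rw [← himg, Set.ncard_image_of_injective _ hEinj]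
  have hAB : A.ncard = B.ncard := by
    rw [← hmirimg, Set.ncard_image_of_injective _ hmirinj]
  have : A.ncard + B.ncard = catalan (2 * n) := by
    rw [← Set.ncard_union_eq hdisj hAfin hBfin, hunion, Set.ncard_coe_finset,
      BinaryTree.treesOfNumNodesEq_card_eq_catalan]
  rw [hSA]
  omega
end

section
/- For every integer n ≥ 0, the number of labelled plane trees with n edges equals (2n)!/n!, i.e. equals (n+1)! times the Catalan number c_n. -/
/-- A labelled plane tree: a root carrying a natural-number label together with a finite
ordered list of labelled plane subtrees. -/
inductive LPlaneTree : Type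
  | node : ℕ → List LPlaneTree → LPlaneTree

namespace LPlaneTree

/-- The number of vertices of a labelled plane tree. -/
def numVertices : LPlaneTree → ℕ
  | node _ ts => 1 + (ts.attach.map fun x => numVertices x.1).sum
decreasing_by
  have := List.sizeOf_lt_of_mem x.2
  simp only [LPlaneTree.node.sizeOf_spec]
  omega

/-- The number of edges of a labelled plane tree: one less than the number of vertices. -/
def numEdges (t : LPlaneTree) : ℕ := t.numVertices - 1

/-- The number of leaves (vertices with no children) of a labelled plane tree. -/
def numLeaves : LPlaneTree → ℕ
  | node _ [] => 1
  | node _ (t :: ts) => ((t :: ts).attach.map fun x => numLeaves x.1).sum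
decreasing_by
  have := List.sizeOf_lt_of_mem x.2
  simp only [LPlaneTree.node.sizeOf_spec]
  omega

/-- The list of all labels appearing in a labelled plane tree. -/
def labels : LPlaneTree → List ℕ
  | node a ts => a :: (ts.attach.map fun x => labels x.1).flatten
decreasing_by
  have := List.sizeOf_lt_of_mem x.2
  simp only [LPlaneTree.node.sizeOf_spec]
  omega

/-- A labelled plane tree with `n` edges: it has `n` edges and its `n + 1` vertices are
labelled bijectively by `{1, 2, …, n+1}`. -/
def IsLabelled (n : ℕ) (t : LPlaneTree) : Prop :=
  t.numEdges = n ∧ t.labels.Perm (List.range' 1 (n + 1))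

end LPlaneTree

namespace LPlaneTree

/-- The labels of a forest, in order. -/
def labelsF (f : List LPlaneTree) : List ℕ := (f.map labels).flatten

theorem labels_node (a : ℕ) (ts : List LPlaneTree) :
    labels (node a ts) = a :: labelsF ts := by
  rw [labels, labelsF, List.attach_map_val]

/-- Encode a plane forest as a binary tree (first-child/next-sibling). -/
def forestF : List LPlaneTree → Tree Unit
  | [] => Tree.nil
  | node _ ts :: rest => Tree.node () (forestF ts) (forestF rest)
decreasing_by
  all_goals simp only [List.cons.sizeOf_spec, LPlaneTree.node.sizeOf_spec]; omega

theorem length_labelsF (f : List LPlaneTree) :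
    (labelsF f).length = (forestF f).numNodes := by
  match f with
  | [] => simp [labelsF, forestF]
  | node a ts :: rest =>
    have h1 := length_labelsF ts
    have h2 := length_labelsF rest
    rw [forestF]
    simp only [labelsF, List.map_cons, List.flatten_cons, List.length_append,
      labels_node, List.length_cons, BinaryTree.numNodes]
    rw [labelsF] at h1 h2
    simp only [Tree.numNodes] at *; omega
decreasing_by
  all_goals simp only [List.cons.sizeOf_spec, LPlaneTree.node.sizeOf_spec]; omega

/-- Decode a binary tree plus a label list into a forest and leftover labels. -/
def decodeF : Tree Unit → List ℕ → List LPlaneTree × List ℕ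
  | BinaryTree.nil, l => ([], l)
  | BinaryTree.node _ a b, l =>
    let p := decodeF a l.tail
    let q := decodeF b p.2
    (node (l.headD 0) p.1 :: q.1, q.2)

theorem decode_encode (f : List LPlaneTree) (r : List ℕ) :
    decodeF (forestF f) (labelsF f ++ r) = (f, r) := by
  match f with
  | [] => simp [labelsF, forestF, decodeF]
  | node a ts :: rest =>
    rw [forestF, decodeF]
    have hl : labelsF (node a ts :: rest) = a :: (labelsF ts ++ labelsF rest) := by
      simp [labelsF, labels_node]
    rw [hl]
    simp only [List.cons_append, List.tail_cons, List.headD_cons, List.append_assoc]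
    rw [decode_encode ts (labelsF rest ++ r)]
    simp only
    rw [decode_encode rest r]
decreasing_by
  all_goals simp only [List.cons.sizeOf_spec, LPlaneTree.node.sizeOf_spec]; omega

theorem decodeF_spec (b : Tree Unit) (l : List ℕ) (h : b.numNodes ≤ l.length) :
    forestF (decodeF b l).1 = b ∧ labelsF (decodeF b l).1 = l.take b.numNodes ∧
      (decodeF b l).2 = l.drop b.numNodes := by
  induction b generalizing l with
  | nil => simp [decodeF, forestF, labelsF]
  | node _ a c iha ihc =>
    simp only [BinaryTree.numNodes] at h ⊢
    obtain ⟨x, l', rfl⟩ : ∃ x l', l = x :: l' := by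
      cases l with
      | nil => simp at h
      | cons x l' => exact ⟨x, l', rfl⟩
    simp only [List.length_cons] at h
    have ha : a.numNodes ≤ l'.length := by omega
    obtain ⟨ha1, ha2, ha3⟩ := iha l' ha
    have hlen : (decodeF a l').2.length = l'.length - a.numNodes := by
      rw [ha3, List.length_drop]
    have hc : c.numNodes ≤ (decodeF a l').2.length := by omega
    obtain ⟨hc1, hc2, hc3⟩ := ihc _ hc
    rw [decodeF]
    simp only [List.tail_cons, List.headD_cons]
    refine ⟨?_, ?_, ?_⟩
    · rw [forestF, ha1, hc1]
    · have : labelsF (node x (decodeF a l').1 :: (decodeF c (decodeF a l').2).1)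
          = x :: (labelsF (decodeF a l').1 ++ labelsF (decodeF c (decodeF a l').2).1) := by
        simp [labelsF, labels_node]
      rw [this, ha2, hc2, ha3]
      have : a.numNodes + c.numNodes + 1 = (a.numNodes + c.numNodes) + 1 := rfl
      rw [this, List.take_succ_cons, List.take_add]
    · rw [hc3, ha3, List.drop_drop, List.drop_succ_cons]

theorem length_labels (t : LPlaneTree) : (labels t).length = t.numVertices := by
  match t with
  | node a ts =>
    rw [labels_node, numVertices, List.attach_map_val, List.length_cons]
    have : labelsF ts = ((ts.map labels)).flatten := rfl
    rw [this, List.length_flatten]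
    have : List.map List.length (ts.map labels) = ts.map numVertices := by
      rw [List.map_map]
      refine List.map_congr_left fun t ht => ?_
      exact length_labels t
    rw [this]
    omega
decreasing_by
  have := List.sizeOf_lt_of_mem ht
  simp only [LPlaneTree.node.sizeOf_spec]
  omega

/-- Encoding of a labelled plane tree: shape (as binary tree) and preorder label list. -/
def encode : LPlaneTree → Tree Unit × List ℕ
  | node a ts => (forestF ts, a :: labelsF ts)

theorem encode_injective : Function.Injective encode := by
  intro t1 t2 h
  obtain ⟨a1, ts1⟩ := t1
  obtain ⟨a2, ts2⟩ := t2
  simp only [encode, Prod.mk.injEq, List.cons.injEq] at h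
  obtain ⟨hf, ha, hl⟩ := h
  have h0 := decode_encode ts1 []
  rw [hf, hl, decode_encode ts2 []] at h0
  injection h0 with h1 h2
  rw [ha, h1]

theorem encode_image (n : ℕ) :
    encode '' {t : LPlaneTree | t.IsLabelled n} =
      ↑(Tree.treesOfNumNodesEq n ×ˢ (List.range' 1 (n + 1)).permutations.toFinset) := by
  ext ⟨b, l⟩
  simp only [Set.mem_image, Set.mem_setOf_eq, Finset.coe_product, Set.mem_prod,
    Finset.mem_coe, Tree.treesOfNumNodesEq, BinaryTree.mem_treesOfNumNodesEq, List.mem_toFinset, List.mem_permutations]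
  constructor
  · rintro ⟨t, ⟨he, hp⟩, heq⟩
    obtain ⟨a, ts⟩ := t
    simp only [encode] at heq
    obtain ⟨rfl, rfl⟩ := Prod.mk.injEq .. ▸ heq
    have hv : (labels (node a ts)).length = numVertices (node a ts) := length_labels _
    rw [labels_node, List.length_cons] at hv
    have hlen := length_labelsF ts
    have hv1 : 1 ≤ numVertices (node a ts) := by omega
    rw [numEdges] at he
    constructor
    · simp only [Tree.numNodes] at *; omega
    · rw [← labels_node]; exact hp
  · rintro ⟨hb, hl⟩
    have hlen : l.length = n + 1 := by
      rw [hl.length_eq, List.length_range']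
    obtain ⟨x, l', rfl⟩ : ∃ x l', l = x :: l' := by
      cases l with
      | nil => simp at hlen
      | cons x l' => exact ⟨x, l', rfl⟩
    simp only [List.length_cons] at hlen
    have hble : b.numNodes ≤ l'.length := by simp only [Tree.numNodes] at *; omega
    obtain ⟨h1, h2, _⟩ := decodeF_spec b l' hble
    have htake : l'.take b.numNodes = l' := by
      apply List.take_of_length_le; simp only [Tree.numNodes] at *; omega
    refine ⟨node x (decodeF b l').1, ⟨?_, ?_⟩, ?_⟩
    · rw [numEdges, ← length_labels, labels_node, List.length_cons, h2, htake]
      omega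
    · rw [labels_node, h2, htake]; exact hl
    · simp only [encode, h1, h2, htake]

theorem card_eq (n : ℕ) :
    {t : LPlaneTree | t.IsLabelled n}.ncard = catalan n * (n + 1).factorial := by
  have h := Set.ncard_image_of_injective {t : LPlaneTree | t.IsLabelled n} encode_injective
  rw [encode_image n, Set.ncard_coe_finset, Finset.card_product,
    BinaryTree.treesOfNumNodesEq_card_eq_catalan,
    List.toFinset_card_of_nodup (List.nodup_permutations _ (List.nodup_range' (s := 1) (n := n + 1))),
    List.length_permutations, List.length_range'] at h
  exact h.symm

end LPlaneTree

/-- For every integer `n ≥ 0`, the number of labelled plane trees with `n` edges equals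
`(2n)!/n!`, i.e. equals `(n+1)!` times the Catalan number `c_n`. -/
theorem card_labelled_plane_trees (n : ℕ) :
    {t : LPlaneTree | t.IsLabelled n}.ncard = (2 * n).factorial / n.factorial ∧
      {t : LPlaneTree | t.IsLabelled n}.ncard = (n + 1).factorial * catalan n := by
  have hc := LPlaneTree.card_eq n
  have key : (n + 1).factorial * catalan n * n.factorial = (2 * n).factorial := by
    have h1 := succ_mul_catalan_eq_centralBinom n
    have h2 : Nat.centralBinom n * n.factorial * n.factorial = (2 * n).factorial := by
      have := Nat.choose_mul_factorial_mul_factorial (show n ≤ 2 * n by omega)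
      rw [Nat.centralBinom]
      have h3 : 2 * n - n = n := by omega
      rw [h3] at this
      exact this
    calc (n + 1).factorial * catalan n * n.factorial
        = ((n + 1) * catalan n) * n.factorial * n.factorial := by
          rw [Nat.factorial_succ]; ring
      _ = Nat.centralBinom n * n.factorial * n.factorial := by rw [h1]
      _ = (2 * n).factorial := h2
  constructor
  · rw [hc, ← key, Nat.mul_div_cancel _ (Nat.factorial_pos n)]
    ring
  · rw [hc]; ring
end
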